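/- Let m be a positive divisor of s. Suppose α_1, …, α_k ∈ F_{q^s} satisfy α_i^{q^m} = α_i for all i (so each α_i lies in the subfield of order q^m), and let A_1, …, A_k ∈ M_n(F_{q^s}). Then rank( Σ_{i=1}^k α_i · φ̄(A_i) ) = (s/m) · Σ_{j=0}^{m−1} rank( Σ_{i=1}^k α_i^{q^j} · A_i ), where φ̄(A_i) is viewed over F_{q^s} via F_q ⊆ F_{q^s} and all ranks are taken over F_{q^s}. -/

import Mathlib

/-!
Let `σ₀, …, σ_{s-1}` be distinct `K`-embeddings of `L` and `P = (σ_j (b_r))`. Applying `σ_j` to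
`a * b_r = ∑_p φ(a)_{pr} b_p` gives `P φ(a) = diag(σ_j a) P`, so conjugating by `1 ⊗ P` turns
`∑ αᵢ φ̄(Aᵢ)` into the block-diagonal matrix with blocks `∑ αᵢ σ_j(Aᵢ)`; `P` is invertible by
Dedekind's independence of characters. Take `σ_j = Frob⁻ʲ`: applying `Frobʲ` to block `j` keeps its
rank and turns it into `∑ αᵢ^{qʲ} Aᵢ`, whose rank depends only on `j mod m` since `αᵢ^{qᵐ} = αᵢ`.
-/

/-- The regular representation `φ : F_{q^s} → M_s(F_q)` with respect to an
`F_q`-basis `b` of `F_{q^s}`. -/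
noncomputable def phi {K L : Type*} [Field K] [Field L] [Algebra K L] {s : ℕ}
    (b : Module.Basis (Fin s) K L) (α : L) : Matrix (Fin s) (Fin s) K :=
  LinearMap.toMatrix b b (LinearMap.mulLeft K α)

/-- `φ̄ : Mₙ(F_{q^s}) → M_{ns}(F_q)` sends `A = (a_{ij})` to the `n × n` block
matrix whose `(i,j)` block is `φ(a_{ij})`. -/
noncomputable def phibar {K L : Type*} [Field K] [Field L] [Algebra K L] {s n : ℕ}
    (b : Module.Basis (Fin s) K L) (A : Matrix (Fin n) (Fin n) L) :
    Matrix (Fin n × Fin s) (Fin n × Fin s) K :=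
  fun p r => phi b (A p.1 r.1) p.2 r.2

open Matrix Module
open scoped Kronecker

section MatrixRank

theorem Matrix.rank_map_ringEquiv {m n R S : Type*} [Fintype n] [CommRing R] [CommRing S]
    (e : R ≃+* S) (A : Matrix m n R) : (A.map e).rank = A.rank := by
  let f : (m → R) →ₛₗ[(e : R →+* S)] (m → S) :=
    { toFun := fun v => e ∘ v
      map_add' := fun v w => by ext; simp
      map_smul' := fun c v => by ext; simp }
  have hspan : (Submodule.span R (Set.range A.col)).map f =
      Submodule.span S (Set.range (A.map e).col) := by
    rw [Submodule.map_span, ← Set.range_comp]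
    rfl
  have := RingHomInvPair.of_ringEquiv e
  have := RingHomInvPair.symm (e : R →+* S) (e.symm : S →+* R)
  have j := Submodule.equivMapOfInjective f
    (fun v w h => funext fun i => e.injective (congrFun h i)) (Submodule.span R (Set.range A.col))
  rw [rank_eq_finrank_span_cols, rank_eq_finrank_span_cols, ← hspan]
  simpa [finrank] using congrArg Cardinal.toNat
    (lift_rank_eq_of_equiv_equiv e j.toAddEquiv e.bijective (fun c x => j.map_smulₛₗ c x)).symm

theorem Matrix.rank_sum_smul_map {R S ι m n : Type*} [CommRing R] [CommRing S] [Fintype ι]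
    [Fintype n] (e : R ≃+* S) (α : ι → S) (A : ι → Matrix m n R) :
    (∑ i, α i • (A i).map e).rank = (∑ i, e.symm (α i) • A i).rank := by
  have hmap : ∑ i, α i • (A i).map e = (∑ i, e.symm (α i) • A i).map e := by
    ext x y
    simp [Matrix.sum_apply]
  rw [hmap, rank_map_ringEquiv]

theorem LinearMap.finrank_range_piMap {K ι : Type*} [Field K] [Fintype ι] {M N : ι → Type*}
    [∀ i, AddCommGroup (M i)] [∀ i, Module K (M i)] [∀ i, FiniteDimensional K (M i)]
    [∀ i, AddCommGroup (N i)] [∀ i, Module K (N i)] (f : ∀ i, M i →ₗ[K] N i) :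
    finrank K (range (piMap f)) = ∑ i, finrank K (range (f i)) := by
  have hfactor : piMap f =
      piMap (fun i => (range (f i)).subtype) ∘ₗ piMap (fun i => (f i).rangeRestrict) := rfl
  rw [hfactor, range_comp_of_range_eq_top, finrank_range_of_inj, finrank_pi_fintype]
  · exact Function.Injective.piMap fun i => Subtype.val_injective
  · exact range_eq_top.2 (Function.Surjective.piMap fun i => (f i).surjective_rangeRestrict)

theorem Matrix.blockDiagonal_mulVec_apply {m n o R : Type*} [Fintype n] [Fintype o]
    [DecidableEq o] [CommRing R] (N : o → Matrix m n R) (v : n × o → R) (i : m) (k : o) :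
    (blockDiagonal N *ᵥ v) (i, k) = (N k *ᵥ fun j => v (j, k)) i := by
  simp [mulVec, dotProduct, Fintype.sum_prod_type, blockDiagonal_apply, ite_mul]

theorem Matrix.rank_blockDiagonal {m n o R : Type*} [Fintype n] [Fintype o] [DecidableEq o]
    [Field R] (N : o → Matrix m n R) : (blockDiagonal N).rank = ∑ k, (N k).rank := by
  let e₁ : (n × o → R) ≃ₗ[R] (o → n → R) :=
    (LinearEquiv.funCongrLeft R R (Equiv.prodComm o n)).trans (LinearEquiv.curry R R o n)
  let e₂ : (o → m → R) ≃ₗ[R] (m × o → R) :=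
    ((LinearEquiv.funCongrLeft R R (Equiv.prodComm o m)).trans (LinearEquiv.curry R R o m)).symm
  have hfactor : (blockDiagonal N).mulVecLin =
      e₂.toLinearMap ∘ₗ LinearMap.piMap (fun k => (N k).mulVecLin) ∘ₗ e₁.toLinearMap := by
    ext v ⟨i, k⟩
    exact blockDiagonal_mulVec_apply N v i k
  rw [rank, hfactor, LinearMap.range_comp, LinearMap.range_comp_of_range_eq_top _ e₁.range,
    LinearEquiv.finrank_map_eq, LinearMap.finrank_range_piMap]
  rfl

end MatrixRank

theorem Function.Periodic.sum_fin_eq_div_nsmul {M : Type*} [AddCommMonoid M] {g : ℕ → M}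
    {m s : ℕ} (hg : Function.Periodic g m) (hdvd : m ∣ s) :
    ∑ j : Fin s, g j = (s / m) • ∑ j : Fin m, g j := by
  obtain ⟨c, rfl⟩ := hdvd
  rw [Fin.sum_univ_eq_sum_range, Fin.sum_univ_eq_sum_range]
  rcases m.eq_zero_or_pos with rfl | hm
  · simp
  rw [Nat.mul_div_cancel_left c hm]
  induction c with
  | zero => simp
  | succ c ih =>
    rw [Nat.mul_succ, Finset.sum_range_add, ih, succ_nsmul]
    congr 1
    refine Finset.sum_congr rfl fun j _ => ?_
    rw [add_comm, mul_comm]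
    simpa using hg.nat_mul c j

section Embeddings

variable {K L C : Type*} [Field K] [Field L] [Field C] [Algebra K L] [Algebra K C] {s : ℕ}

noncomputable def embeddingsBasisMatrix (σ : Fin s → L →ₐ[K] C) (b : Basis (Fin s) K L) :
    Matrix (Fin s) (Fin s) C :=
  of fun j r => σ j (b r)

theorem det_embeddingsBasisMatrix_ne_zero {σ : Fin s → L →ₐ[K] C} (hσ : Function.Injective σ)
    (b : Basis (Fin s) K L) : (embeddingsBasisMatrix σ b).det ≠ 0 := by
  intro hdet
  obtain ⟨c, hc, hcP⟩ := exists_vecMul_eq_zero_iff.mpr hdet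
  have hsum : ∑ j, c j • (σ j).toLinearMap = 0 := b.ext fun r => by
    simpa [vecMul, dotProduct, embeddingsBasisMatrix] using congrFun hcP r
  exact hc (funext (Fintype.linearIndependent_iff.mp
    ((linearIndependent_toLinearMap K L C).comp σ hσ) c hsum))

theorem sum_algHom_basis_mul_phi (σ : L →ₐ[K] C) (b : Basis (Fin s) K L) (a : L) (r : Fin s) :
    ∑ p, σ (b p) * algebraMap K C (phi b a p r) = σ a * σ (b r) := by
  have hrepr : a * b r = ∑ p, phi b a p r • b p := by
    simp [phi, LinearMap.toMatrix_apply]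
  rw [← map_mul, hrepr, map_sum]
  simp [Algebra.smul_def, mul_comm]

theorem one_kronecker_embeddingsBasisMatrix_mul_phibar_map (σ : Fin s → L →ₐ[K] C)
    (b : Basis (Fin s) K L) {n : ℕ} (A : Matrix (Fin n) (Fin n) L) :
    ((1 : Matrix (Fin n) (Fin n) C) ⊗ₖ embeddingsBasisMatrix σ b) *
        (phibar b A).map (algebraMap K C) =
      blockDiagonal (fun j => A.map (σ j)) *
        ((1 : Matrix (Fin n) (Fin n) C) ⊗ₖ embeddingsBasisMatrix σ b) := by
  ext ⟨x, j⟩ ⟨y, r⟩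
  simp [mul_apply, Fintype.sum_prod_type, kroneckerMap_apply, one_apply, blockDiagonal_apply,
    phibar, embeddingsBasisMatrix, sum_algHom_basis_mul_phi]

theorem rank_sum_smul_phibar_map {σ : Fin s → L →ₐ[K] C} (hσ : Function.Injective σ)
    (b : Basis (Fin s) K L) {n : ℕ} {ι : Type*} [Fintype ι] (α : ι → C)
    (A : ι → Matrix (Fin n) (Fin n) L) :
    (∑ i, α i • (phibar b (A i)).map (algebraMap K C)).rank =
      ∑ j, (∑ i, α i • (A i).map (σ j)).rank := by
  set Q := (1 : Matrix (Fin n) (Fin n) C) ⊗ₖ embeddingsBasisMatrix σ b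
  have hQ : IsUnit Q.det := by
    rw [det_kronecker, det_one, one_pow, one_mul]
    exact (isUnit_iff_ne_zero.2 (det_embeddingsBasisMatrix_ne_zero hσ b)).pow _
  have hconj : Q * ∑ i, α i • (phibar b (A i)).map (algebraMap K C) =
      blockDiagonal (fun j => ∑ i, α i • (A i).map (σ j)) * Q := by
    simp only [Matrix.mul_sum, Matrix.mul_smul, Q,
      one_kronecker_embeddingsBasisMatrix_mul_phibar_map, ← Matrix.smul_mul, ← Matrix.sum_mul,
      ← blockDiagonal_smul]
    congr 1
    ext ⟨x, j⟩ ⟨y, r⟩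
    simp [blockDiagonal_apply, Matrix.sum_apply]
  rw [← rank_mul_eq_right_of_isUnit_det Q _ hQ, hconj, rank_mul_eq_left_of_isUnit_det Q _ hQ,
    rank_blockDiagonal]

end Embeddings

namespace FiniteField

theorem injective_frobeniusAlgEquivOfAlgebraic_pow_symm (K L : Type*) [Field K] [Fintype K]
    [Field L] [Finite L] [Algebra K L] :
    Function.Injective fun j : Fin (finrank K L) =>
      ((frobeniusAlgEquivOfAlgebraic K L ^ (j : ℕ)).symm : L →ₐ[K] L) := by
  intro j j' h
  exact Fin.ext (pow_injOn_Iio_orderOf (by simp [orderOf_frobeniusAlgEquivOfAlgebraic])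
    (by simp [orderOf_frobeniusAlgEquivOfAlgebraic])
    (AlgEquiv.symm_bijective.injective (AlgEquiv.coe_toAlgHom_injective h)))

end FiniteField

theorem rank_phibar_sum_of_subfield_coeffs_general (q s n k m : ℕ) (hdvd : m ∣ s)
    (K L : Type*) [Field K] [Fintype K] [Field L] [Fintype L] [Algebra K L]
    (hKcard : Fintype.card K = q)
    (b : Module.Basis (Fin s) K L) (α : Fin k → L) (hα : ∀ i, α i ^ q ^ m = α i)
    (A : Fin k → Matrix (Fin n) (Fin n) L) :
    (∑ i, α i • (phibar b (A i)).map (algebraMap K L)).rank =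
      (s / m) * ∑ j : Fin m, (∑ i, (α i ^ q ^ (j : ℕ)) • A i).rank := by
  have hperiod : Function.Periodic (fun j => (∑ i, (α i ^ q ^ j) • A i).rank) m := fun j => by
    simp only [pow_add, mul_comm (q ^ j), pow_mul, hα]
  obtain rfl : finrank K L = s := by simpa using finrank_eq_card_basis b
  rw [rank_sum_smul_phibar_map
      (FiniteField.injective_frobeniusAlgEquivOfAlgebraic_pow_symm K L) b, ← smul_eq_mul,
    ← hperiod.sum_fin_eq_div_nsmul hdvd]
  refine Fintype.sum_congr _ _ fun j => ?_
  let τ : L ≃+* L := (FiniteField.frobeniusAlgEquivOfAlgebraic K L ^ (j : ℕ)).symm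
  refine (rank_sum_smul_map τ α A).trans ?_
  simp [τ, AlgEquiv.coe_pow, FiniteField.coe_frobeniusAlgEquivOfAlgebraic_iterate, hKcard]

/-- Let `m` be a positive divisor of `s`, let `α₁, …, α_k ∈ F_{q^s}`
satisfy `αᵢ^{qᵐ} = αᵢ` (so each `αᵢ` lies in the subfield of order `qᵐ`), and let
`A₁, …, A_k ∈ Mₙ(F_{q^s})`.  Then
`rank(Σᵢ αᵢ·φ̄(Aᵢ)) = (s/m) · Σ_{j=0}^{m−1} rank(Σᵢ αᵢ^{qʲ}·Aᵢ)`,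
where `φ̄(Aᵢ)` is viewed over `F_{q^s}` via `F_q ⊆ F_{q^s}` and all ranks are taken
over `F_{q^s}`. -/
theorem rank_phibar_sum_of_subfield_coeffs (q s n k m : ℕ) (hq : IsPrimePow q)
    (hs : 1 ≤ s) (hn : 1 ≤ n) (hk : 1 ≤ k) (hm : 1 ≤ m) (hdvd : m ∣ s)
    (K L : Type*) [Field K] [Fintype K] [Field L] [Fintype L] [Algebra K L]
    (hKcard : Fintype.card K = q) (hLcard : Fintype.card L = q ^ s)
    (b : Module.Basis (Fin s) K L) (α : Fin k → L) (hα : ∀ i, α i ^ q ^ m = α i)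
    (A : Fin k → Matrix (Fin n) (Fin n) L) :
    (∑ i, α i • (phibar b (A i)).map (algebraMap K L)).rank =
      (s / m) * ∑ j : Fin m, (∑ i, (α i ^ q ^ (j : ℕ)) • A i).rank :=
  rank_phibar_sum_of_subfield_coeffs_general q s n k m hdvd K L hKcard b α hα A
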